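/- arXiv:2505.06383 — 3 statements merged into one kernel-verified Lean document; each statement's English description precedes it below -/
import Mathlib

section
/- For every real number φ with 0 < φ < 1 and every natural number n ≥ 1, the ratio R_{n,φ} := B_{n,φ}/A_{n,φ} satisfies the exact formula R_{n,φ} = 2/(1 − φ^n) − 2/(n(1 − φ)). -/
/-!
With `S = ∑_{k=1}^n φ^k` and `D = ∑_{i ≠ j} φ^{|i-j|}`, adding the index `n + 1` gives
`D_{n+1} = D_n + 2 S_n`, whence `D (1 - φ) = 2 (n φ - S)`; together with `S (1 - φ) = φ (1 - φ^n)`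
the ratio `R = D / (n S)` reduces to the closed form by field arithmetic.
-/

open Finset

section OffDiagonal

variable {M : Type*} [AddCommMonoid M]

theorem sum_Icc_one_reflect (g : ℕ → M) (n : ℕ) :
    ∑ j ∈ Icc 1 n, g (n + 1 - j) = ∑ k ∈ Icc 1 n, g k :=
  sum_nbij' (fun j => n + 1 - j) (fun k => n + 1 - k)
    (by intro j hj; simp only [mem_Icc] at hj ⊢; omega)
    (by intro k hk; simp only [mem_Icc] at hk ⊢; omega)
    (by intro j hj; simp only [mem_Icc] at hj; omega)
    (by intro k hk; simp only [mem_Icc] at hk; omega)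
    (fun _ _ => rfl)

/-- `∑_{i ≠ j} g |i - j|` over `1 ≤ i, j ≤ n`; for `g = (φ ^ ·)` this is `n² B_{n,φ}`. -/
def offDiagSum (g : ℕ → M) (n : ℕ) : M :=
  ∑ i ∈ Icc 1 n, ∑ j ∈ (Icc 1 n).erase i, g ((i : ℤ) - j).natAbs

/-- Adding the index `n + 1` adds the pairs `(i, n + 1)` and `(n + 1, i)`, at distance `n + 1 - i`. -/
theorem offDiagSum_succ (g : ℕ → M) (n : ℕ) :
    offDiagSum g (n + 1) = offDiagSum g n + 2 • ∑ k ∈ Icc 1 n, g k := by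
  have erase_top : (Icc 1 (n + 1)).erase (n + 1) = Icc 1 n := by
    rw [Icc_erase_right, Ico_add_one_right_eq_Icc]
  have row (i : ℕ) (hi : i ∈ Icc 1 n) :
      ∑ j ∈ (Icc 1 (n + 1)).erase i, g ((i : ℤ) - j).natAbs
        = g (n + 1 - i) + ∑ j ∈ (Icc 1 n).erase i, g ((i : ℤ) - j).natAbs := by
    rw [mem_Icc] at hi
    have : (Icc 1 (n + 1)).erase i = insert (n + 1) ((Icc 1 n).erase i) := by
      ext x; simp only [mem_erase, mem_insert, mem_Icc]; omega
    rw [this, sum_insert (by simp only [mem_erase, mem_Icc]; omega)]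
    congr 2; omega
  have column (j : ℕ) (hj : j ∈ Icc 1 n) :
      g (((n + 1 : ℕ) : ℤ) - j).natAbs = g (n + 1 - j) := by
    rw [mem_Icc] at hj
    congr 1; omega
  rw [offDiagSum, sum_Icc_succ_top (by omega), erase_top, sum_congr rfl row, sum_add_distrib,
    sum_congr rfl column, sum_Icc_one_reflect, two_nsmul, offDiagSum]
  abel

end OffDiagonal

section Powers

variable {R : Type*} [CommRing R]

theorem sum_Icc_one_pow_mul_one_sub (φ : R) (n : ℕ) :
    (∑ k ∈ Icc 1 n, φ ^ k) * (1 - φ) = φ - φ ^ (n + 1) := by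
  induction n with
  | zero => simp
  | succ m ih =>
    rw [sum_Icc_succ_top (by omega), add_mul, ih]
    ring

theorem offDiagSum_pow_mul_one_sub (φ : R) (n : ℕ) :
    offDiagSum (φ ^ ·) n * (1 - φ) = 2 * (n * φ - ∑ k ∈ Icc 1 n, φ ^ k) := by
  induction n with
  | zero => simp [offDiagSum]
  | succ m ih =>
    rw [offDiagSum_succ, add_mul, ih, nsmul_eq_mul, mul_assoc, sum_Icc_one_pow_mul_one_sub,
      sum_Icc_succ_top (by omega)]
    push_cast
    ring

end Powers

/-- For `0 < φ < 1` and `n ≥ 1`, the ratio `R_{n,φ} = B_{n,φ}/A_{n,φ}` satisfies the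
exact formula `R_{n,φ} = 2/(1 - φ^n) - 2/(n(1 - φ))`. -/
theorem R_closed_form (φ : ℝ) (hφ0 : 0 < φ) (hφ1 : φ < 1) (n : ℕ) (hn : 1 ≤ n) :
    ((1 / (n : ℝ) ^ 2) *
        ∑ i ∈ Finset.Icc 1 n, ∑ j ∈ (Finset.Icc 1 n).erase i,
          φ ^ (((i : ℤ) - (j : ℤ)).natAbs)) /
      ((1 / (n : ℝ)) * ∑ k ∈ Finset.Icc 1 n, φ ^ k) =
      2 / (1 - φ ^ n) - 2 / ((n : ℝ) * (1 - φ)) := by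
  change 1 / (n : ℝ) ^ 2 * offDiagSum (φ ^ ·) n / _ = _
  have hn0 : (n : ℝ) ≠ 0 := by positivity
  have hφ1' : 1 - φ ≠ 0 := by linarith
  have hφn : 1 - φ ^ n ≠ 0 := sub_ne_zero.mpr (pow_lt_one₀ hφ0.le hφ1 (by omega)).ne'
  have hS : ∑ k ∈ Icc 1 n, φ ^ k ≠ 0 := (sum_pos (fun k _ => pow_pos hφ0 k) ⟨1, by simp [hn]⟩).ne'
  have hD := offDiagSum_pow_mul_one_sub φ n
  have hG := sum_Icc_one_pow_mul_one_sub φ n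
  field_simp
  linear_combination (1 - φ ^ n) * hD - 2 * (n : ℝ) * hG
end

section
/- (Proposition 1, bias of the IID-resampled mean.) Let (Ω, P) be a probability space, let n ≥ 1, let γ > 0 and 0 ≤ φ < 1, and let R_1, …, R_{n+1} be square-integrable real random variables with Var(R_i) = σ_R² > 0 for all i and Cov(R_i, R_j) = σ_μ²·φ^{|i−j|} for all i ≠ j, where 0 ≤ σ_μ² ≤ σ_R². Define the rolling-window mean-variance weight w := (1/(γσ_R²))·(1/n)·Σ_{i=1}^{n} R_i. Then the bias of the IID-resampled backtested mean, namely −Cov(w, R_{n+1}), equals −(1/γ)·(σ_μ²/σ_R²)·A_{n,φ}, and it satisfies −(1/γ)·ψ ≤ −Cov(w, R_{n+1}) ≤ 0, where ψ := φ·σ_μ²/σ_R² is the first-lag autocorrelation of the returns and A_{n,φ} := (1/n)·Σ_{k=1}^{n} φ^k. -/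
open Finset MeasureTheory

/-- Covariance `Cov(X, Y) = E[(X - E[X])(Y - E[Y])]` of real random variables.
The variance of `X` is `cov μ X X`. -/
noncomputable def cov {Ω : Type*} [MeasurableSpace Ω] (μ : Measure Ω) (X Y : Ω → ℝ) : ℝ :=
  ∫ ω, (X ω - ∫ ω', X ω' ∂μ) * (Y ω - ∫ ω', Y ω' ∂μ) ∂μ

/-!
Covariance is bilinear, so `Cov(w, R_{n+1})` is `1/(γσ_R²)` times the average of the lagged
covariances `Cov(R_i, R_{n+1}) = σ_μ² φ^{n+1-i}`, and reindexing by the lag `k = n + 1 - i`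
turns that average into `σ_μ² A_{n,φ}`. For `0 ≤ φ ≤ 1` every `φ^k` with `k ≥ 1` lies in
`[0, φ]`, hence so does their average `A_{n,φ}`, which gives both bounds.
-/

/-- The paper's `A_{n,φ}`. -/
noncomputable def lagAverage (n : ℕ) (φ : ℝ) : ℝ :=
  (1 / (n : ℝ)) * ∑ k ∈ Icc 1 n, φ ^ k

lemma lagAverage_nonneg {φ : ℝ} (hφ : 0 ≤ φ) (n : ℕ) : 0 ≤ lagAverage n φ := by
  unfold lagAverage; positivity

lemma lagAverage_le {φ : ℝ} (hφ0 : 0 ≤ φ) (hφ1 : φ ≤ 1) (n : ℕ) : lagAverage n φ ≤ φ := by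
  rcases Nat.eq_zero_or_pos n with rfl | hn
  · simpa [lagAverage] using hφ0
  have hsum : ∑ k ∈ Icc 1 n, φ ^ k ≤ n * φ := by
    simpa using sum_le_card_nsmul (Icc 1 n) (φ ^ ·) φ fun k hk =>
      pow_le_of_le_one hφ0 hφ1 (by simp at hk; omega)
  rw [lagAverage, one_div_mul_eq_div, div_le_iff₀ (by positivity)]
  linarith

lemma sum_Icc_natAbs_sub_succ {M : Type*} [AddCommMonoid M] (f : ℕ → M) (n : ℕ) :
    ∑ i ∈ Icc 1 n, f ((i : ℤ) - ((n + 1 : ℕ) : ℤ)).natAbs = ∑ k ∈ Icc 1 n, f k := by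
  refine sum_nbij' (n + 1 - ·) (n + 1 - ·) ?_ ?_ ?_ ?_ ?_ <;> intro i hi <;> simp only [mem_Icc] at hi
  · simp only [mem_Icc]; omega
  · simp only [mem_Icc]; omega
  · omega
  · omega
  · congr 1; omega

lemma cov_eq_covariance {Ω : Type*} [MeasurableSpace Ω] (μ : Measure Ω) (X Y : Ω → ℝ) :
    cov μ X Y = ProbabilityTheory.covariance X Y μ :=
  rfl

lemma cov_scaled_average_succ {Ω : Type*} [MeasurableSpace Ω] (μ : Measure Ω)
    [IsFiniteMeasure μ] (c : ℝ) (n : ℕ) (φ σμ2 : ℝ) (R : ℕ → Ω → ℝ)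
    (hL2 : ∀ i ∈ Icc 1 (n + 1), MemLp (R i) 2 μ)
    (hcov : ∀ i ∈ Icc 1 (n + 1), ∀ j ∈ Icc 1 (n + 1), i ≠ j →
      cov μ (R i) (R j) = σμ2 * φ ^ (((i : ℤ) - (j : ℤ)).natAbs)) :
    cov μ (fun ω => c * ((1 / (n : ℝ)) * ∑ i ∈ Icc 1 n, R i ω)) (R (n + 1)) =
      c * σμ2 * lagAverage n φ := by
  have hle : ∀ i ∈ Icc 1 n, i ∈ Icc 1 (n + 1) := fun i hi => by
    simp only [mem_Icc] at hi ⊢; omega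
  have hlast : n + 1 ∈ Icc 1 (n + 1) := by simp
  have hlag : ∀ i ∈ Icc 1 n, cov μ (R i) (R (n + 1)) =
      σμ2 * φ ^ ((i : ℤ) - ((n + 1 : ℕ) : ℤ)).natAbs := fun i hi =>
    hcov i (hle i hi) _ hlast (by simp only [mem_Icc] at hi; omega)
  simp only [cov_eq_covariance, ProbabilityTheory.covariance_const_mul_left] at hlag ⊢
  rw [ProbabilityTheory.covariance_fun_sum_left' (fun i hi => hL2 i (hle i hi)) (hL2 _ hlast),
    sum_congr rfl hlag, ← mul_sum, sum_Icc_natAbs_sub_succ (φ ^ ·), lagAverage]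
  ring

theorem bias_resampled_mean_general {Ω : Type*} [MeasurableSpace Ω] (μ : Measure Ω)
    [IsProbabilityMeasure μ] (n : ℕ) (γ φ : ℝ) (hγ : 0 < γ)
    (hφ0 : 0 ≤ φ) (hφ1 : φ < 1) (R : ℕ → Ω → ℝ) (σR2 σμ2 : ℝ)
    (hσR2 : 0 < σR2) (hσμ2 : 0 ≤ σμ2)
    (hL2 : ∀ i ∈ Finset.Icc 1 (n + 1), MemLp (R i) 2 μ)
    (hcov : ∀ i ∈ Finset.Icc 1 (n + 1), ∀ j ∈ Finset.Icc 1 (n + 1), i ≠ j →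
      cov μ (R i) (R j) = σμ2 * φ ^ (((i : ℤ) - (j : ℤ)).natAbs)) :
    (-cov μ (fun ω => (1 / (γ * σR2)) * ((1 / (n : ℝ)) * ∑ i ∈ Finset.Icc 1 n, R i ω))
        (R (n + 1)) =
      -(1 / γ) * (σμ2 / σR2) * ((1 / (n : ℝ)) * ∑ k ∈ Finset.Icc 1 n, φ ^ k)) ∧
    (-(1 / γ) * (φ * σμ2 / σR2) ≤
      -cov μ (fun ω => (1 / (γ * σR2)) * ((1 / (n : ℝ)) * ∑ i ∈ Finset.Icc 1 n, R i ω))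
        (R (n + 1))) ∧
    (-cov μ (fun ω => (1 / (γ * σR2)) * ((1 / (n : ℝ)) * ∑ i ∈ Finset.Icc 1 n, R i ω))
        (R (n + 1)) ≤ 0) := by
  have hbias : cov μ (fun ω => (1 / (γ * σR2)) * ((1 / (n : ℝ)) * ∑ i ∈ Icc 1 n, R i ω))
      (R (n + 1)) = 1 / γ * (σμ2 / σR2) * lagAverage n φ := by
    rw [cov_scaled_average_succ μ _ n φ σμ2 R hL2 hcov]
    ring
  have hscale : 0 ≤ 1 / γ * (σμ2 / σR2) := by positivity
  have hnonneg := mul_nonneg hscale (lagAverage_nonneg hφ0 n)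
  have hle_ψ : 1 / γ * (σμ2 / σR2) * lagAverage n φ ≤ 1 / γ * (φ * σμ2 / σR2) :=
    calc _ ≤ 1 / γ * (σμ2 / σR2) * φ :=
          mul_le_mul_of_nonneg_left (lagAverage_le hφ0 hφ1.le n) hscale
      _ = _ := by ring
  rw [hbias]
  refine ⟨by rw [lagAverage]; ring, by linarith, by linarith⟩

/-- Proposition 1: the bias of the IID-resampled backtested mean of a rolling-window
mean-variance portfolio, `−Cov(w, R_{n+1})` with `w = (1/(γσ_R²))·(1/n)∑_{i=1}^n R_i`,
equals `−(1/γ)(σ_μ²/σ_R²)A_{n,φ}` and satisfies `−(1/γ)ψ ≤ −Cov(w, R_{n+1}) ≤ 0`,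
where `ψ = φσ_μ²/σ_R²` and `A_{n,φ} = (1/n)∑_{k=1}^n φ^k`. -/
theorem bias_resampled_mean {Ω : Type*} [MeasurableSpace Ω] (μ : Measure Ω)
    [IsProbabilityMeasure μ] (n : ℕ) (hn : 1 ≤ n) (γ φ : ℝ) (hγ : 0 < γ)
    (hφ0 : 0 ≤ φ) (hφ1 : φ < 1) (R : ℕ → Ω → ℝ) (σR2 σμ2 : ℝ)
    (hσR2 : 0 < σR2) (hσμ2 : 0 ≤ σμ2) (hσμR : σμ2 ≤ σR2)
    (hL2 : ∀ i ∈ Finset.Icc 1 (n + 1), MemLp (R i) 2 μ)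
    (hvar : ∀ i ∈ Finset.Icc 1 (n + 1), cov μ (R i) (R i) = σR2)
    (hcov : ∀ i ∈ Finset.Icc 1 (n + 1), ∀ j ∈ Finset.Icc 1 (n + 1), i ≠ j →
      cov μ (R i) (R j) = σμ2 * φ ^ (((i : ℤ) - (j : ℤ)).natAbs)) :
    (-cov μ (fun ω => (1 / (γ * σR2)) * ((1 / (n : ℝ)) * ∑ i ∈ Finset.Icc 1 n, R i ω))
        (R (n + 1)) =
      -(1 / γ) * (σμ2 / σR2) * ((1 / (n : ℝ)) * ∑ k ∈ Finset.Icc 1 n, φ ^ k)) ∧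
    (-(1 / γ) * (φ * σμ2 / σR2) ≤
      -cov μ (fun ω => (1 / (γ * σR2)) * ((1 / (n : ℝ)) * ∑ i ∈ Finset.Icc 1 n, R i ω))
        (R (n + 1))) ∧
    (-cov μ (fun ω => (1 / (γ * σR2)) * ((1 / (n : ℝ)) * ∑ i ∈ Finset.Icc 1 n, R i ω))
        (R (n + 1)) ≤ 0) :=
  bias_resampled_mean_general μ n γ φ hγ hφ0 hφ1 R σR2 σμ2 hσR2 hσμ2 hL2 hcov
end

section
/- (Proposition 2, bound on the bias of the IID-resampled variance.) Let γ > 0, 0 ≤ φ < 1, n ≥ 1, θ ∈ ℝ, and 0 ≤ s ≤ 1, and set ψ := s·φ, A := A_{n,φ}, B := B_{n,φ}. Then the quantity E := −(1/γ²)·[(θ² + 1)·s·B + s·A·(s·A + 2θ²)] satisfies −(C/γ²)·ψ ≤ E ≤ 0, where C := 3θ² + ψ + 1. -/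
/-!
Every power `φ ^ k` with `k ≥ 1` lies in `[0, φ]`, so both averages `A_{n,φ}` and `B_{n,φ}`
lie in `[0, φ]`. The bracket `(θ² + 1)·s·B + s·A·(s·A + 2θ²)` is monotone in `A, B ≥ 0`, hence
lies between `0` and its value at `A = B = φ`, which is `(3θ² + ψ + 1)·ψ`.
-/

open Finset

/-- `A_{n,φ}` of the paper. -/
noncomputable def meanLagPower (φ : ℝ) (n : ℕ) : ℝ :=
  (1 / (n : ℝ)) * ∑ k ∈ Icc 1 n, φ ^ k

/-- `B_{n,φ}` of the paper. -/
noncomputable def meanCrossLagPower (φ : ℝ) (n : ℕ) : ℝ :=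
  (1 / (n : ℝ) ^ 2) * ∑ i ∈ Icc 1 n, ∑ j ∈ (Icc 1 n).erase i, φ ^ ((i : ℤ) - (j : ℤ)).natAbs

section PowerMeans

variable {φ : ℝ}

lemma sum_pow_le_card_mul {ι : Type*} (s : Finset ι) (e : ι → ℕ) (hφ0 : 0 ≤ φ) (hφ1 : φ ≤ 1)
    (he : ∀ i ∈ s, e i ≠ 0) : ∑ i ∈ s, φ ^ e i ≤ #s * φ := by
  simpa using sum_le_card_nsmul s _ φ fun i hi => pow_le_of_le_one hφ0 hφ1 (he i hi)

lemma one_div_mul_le_of_le_mul {m x : ℝ} (hm : 0 ≤ m) (hφ0 : 0 ≤ φ) (hx : x ≤ m * φ) :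
    1 / m * x ≤ φ :=
  calc 1 / m * x ≤ 1 / m * (m * φ) := by gcongr
    _ = m / m * φ := by ring
    _ ≤ φ := mul_le_of_le_one_left hφ0 (div_self_le_one _)

lemma meanLagPower_nonneg (hφ0 : 0 ≤ φ) (n : ℕ) : 0 ≤ meanLagPower φ n := by
  unfold meanLagPower; positivity

lemma meanCrossLagPower_nonneg (hφ0 : 0 ≤ φ) (n : ℕ) : 0 ≤ meanCrossLagPower φ n := by
  unfold meanCrossLagPower; positivity

lemma meanLagPower_le (hφ0 : 0 ≤ φ) (hφ1 : φ ≤ 1) (n : ℕ) : meanLagPower φ n ≤ φ := by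
  refine one_div_mul_le_of_le_mul n.cast_nonneg hφ0 ?_
  simpa using sum_pow_le_card_mul (Icc 1 n) id hφ0 hφ1 fun k hk =>
    Nat.one_le_iff_ne_zero.mp (mem_Icc.mp hk).1

lemma meanCrossLagPower_le (hφ0 : 0 ≤ φ) (hφ1 : φ ≤ 1) (n : ℕ) : meanCrossLagPower φ n ≤ φ := by
  have hrow : ∀ i ∈ Icc 1 n,
      ∑ j ∈ (Icc 1 n).erase i, φ ^ ((i : ℤ) - (j : ℤ)).natAbs ≤ n * φ := fun i _ =>
    calc _ ≤ #((Icc 1 n).erase i) * φ :=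
          sum_pow_le_card_mul _ _ hφ0 hφ1 fun j hj => by
            have := ne_of_mem_erase hj; omega
      _ ≤ n * φ := by
          gcongr
          simpa using card_erase_le (s := Icc 1 n) (a := i)
  refine one_div_mul_le_of_le_mul (by positivity) hφ0 ?_
  calc _ ≤ ∑ _i ∈ Icc 1 n, (n : ℝ) * φ := sum_le_sum hrow
    _ = (n : ℝ) ^ 2 * φ := by
      simp only [sum_const, Nat.card_Icc, add_tsub_cancel_right, nsmul_eq_mul]; ring

end PowerMeans

lemma bias_bracket_nonneg_and_le {θ s φ A B : ℝ} (hs : 0 ≤ s) (hA0 : 0 ≤ A) (hA : A ≤ φ)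
    (hB0 : 0 ≤ B) (hB : B ≤ φ) :
    0 ≤ (θ ^ 2 + 1) * s * B + s * A * (s * A + 2 * θ ^ 2) ∧
      (θ ^ 2 + 1) * s * B + s * A * (s * A + 2 * θ ^ 2) ≤ (3 * θ ^ 2 + s * φ + 1) * (s * φ) := by
  refine ⟨by positivity, ?_⟩
  have hsA : s * A ≤ s * φ := mul_le_mul_of_nonneg_left hA hs
  have hsB : s * B ≤ s * φ := mul_le_mul_of_nonneg_left hB hs
  have hsA0 : 0 ≤ s * A := mul_nonneg hs hA0
  nlinarith [sq_nonneg θ]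

theorem bias_resampled_variance_bound_general (γ φ θ s : ℝ) (hφ0 : 0 ≤ φ)
    (hφ1 : φ < 1) (n : ℕ) (hs0 : 0 ≤ s) :
    -((3 * θ ^ 2 + s * φ + 1) / γ ^ 2) * (s * φ) ≤
      -(1 / γ ^ 2) *
        ((θ ^ 2 + 1) * s *
            ((1 / (n : ℝ) ^ 2) *
              ∑ i ∈ Finset.Icc 1 n, ∑ j ∈ (Finset.Icc 1 n).erase i,
                φ ^ (((i : ℤ) - (j : ℤ)).natAbs)) +
          s * ((1 / (n : ℝ)) * ∑ k ∈ Finset.Icc 1 n, φ ^ k) *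
            (s * ((1 / (n : ℝ)) * ∑ k ∈ Finset.Icc 1 n, φ ^ k) + 2 * θ ^ 2)) ∧
    -(1 / γ ^ 2) *
        ((θ ^ 2 + 1) * s *
            ((1 / (n : ℝ) ^ 2) *
              ∑ i ∈ Finset.Icc 1 n, ∑ j ∈ (Finset.Icc 1 n).erase i,
                φ ^ (((i : ℤ) - (j : ℤ)).natAbs)) +
          s * ((1 / (n : ℝ)) * ∑ k ∈ Finset.Icc 1 n, φ ^ k) *
            (s * ((1 / (n : ℝ)) * ∑ k ∈ Finset.Icc 1 n, φ ^ k) + 2 * θ ^ 2)) ≤ 0 := by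
  obtain ⟨hlow, hhigh⟩ := bias_bracket_nonneg_and_le (θ := θ) hs0
    (meanLagPower_nonneg hφ0 n) (meanLagPower_le hφ0 hφ1.le n)
    (meanCrossLagPower_nonneg hφ0 n) (meanCrossLagPower_le hφ0 hφ1.le n)
  have hscale : 0 ≤ 1 / γ ^ 2 := by positivity
  refine ⟨?_, mul_nonpos_of_nonpos_of_nonneg (neg_nonpos.mpr hscale) hlow⟩
  rw [show -((3 * θ ^ 2 + s * φ + 1) / γ ^ 2) * (s * φ)
      = -(1 / γ ^ 2) * ((3 * θ ^ 2 + s * φ + 1) * (s * φ)) by ring]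
  exact mul_le_mul_of_nonpos_left hhigh (neg_nonpos.mpr hscale)

/-- Proposition 2: the bias of the IID-resampled backtested variance,
`E = −(1/γ²)[(θ²+1)·s·B + s·A·(s·A + 2θ²)]` with `s = σ_μ²/σ_R²`, `A = A_{n,φ}`,
`B = B_{n,φ}`, satisfies `−(C/γ²)·ψ ≤ E ≤ 0` where `ψ = s·φ` and `C = 3θ² + ψ + 1`. -/
theorem bias_resampled_variance_bound (γ φ θ s : ℝ) (hγ : 0 < γ) (hφ0 : 0 ≤ φ)
    (hφ1 : φ < 1) (n : ℕ) (hn : 1 ≤ n) (hs0 : 0 ≤ s) (hs1 : s ≤ 1) :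
    -((3 * θ ^ 2 + s * φ + 1) / γ ^ 2) * (s * φ) ≤
      -(1 / γ ^ 2) *
        ((θ ^ 2 + 1) * s *
            ((1 / (n : ℝ) ^ 2) *
              ∑ i ∈ Finset.Icc 1 n, ∑ j ∈ (Finset.Icc 1 n).erase i,
                φ ^ (((i : ℤ) - (j : ℤ)).natAbs)) +
          s * ((1 / (n : ℝ)) * ∑ k ∈ Finset.Icc 1 n, φ ^ k) *
            (s * ((1 / (n : ℝ)) * ∑ k ∈ Finset.Icc 1 n, φ ^ k) + 2 * θ ^ 2)) ∧
    -(1 / γ ^ 2) *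
        ((θ ^ 2 + 1) * s *
            ((1 / (n : ℝ) ^ 2) *
              ∑ i ∈ Finset.Icc 1 n, ∑ j ∈ (Finset.Icc 1 n).erase i,
                φ ^ (((i : ℤ) - (j : ℤ)).natAbs)) +
          s * ((1 / (n : ℝ)) * ∑ k ∈ Finset.Icc 1 n, φ ^ k) *
            (s * ((1 / (n : ℝ)) * ∑ k ∈ Finset.Icc 1 n, φ ^ k) + 2 * θ ^ 2)) ≤ 0 :=
  bias_resampled_variance_bound_general γ φ θ s hφ0 hφ1 n hs0
end
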